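/- arXiv:0710.3070 — 4 statements merged into one kernel-verified Lean document; each statement's English description precedes it below -/
import Mathlib

section
/- Every module M over Z/p² is isomorphic to a direct sum of Γ(M) and a free Z/p²-module, where Γ(M) = (Ann_M p)/pM. -/
/-- The `Z/p²`-submodule `Ann_M p = {m : M | p • m = 0}`. -/
noncomputable def annP (p : ℕ) (M : Type) [AddCommGroup M]
    [Module (ZMod (p ^ 2)) M] : Submodule (ZMod (p ^ 2)) M :=
  LinearMap.ker ((LinearMap.lsmul (ZMod (p ^ 2)) M) (p : ZMod (p ^ 2)))

/-- The `Z/p²`-submodule `pM`. -/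
noncomputable def pSM (p : ℕ) (M : Type) [AddCommGroup M]
    [Module (ZMod (p ^ 2)) M] : Submodule (ZMod (p ^ 2)) M :=
  LinearMap.range ((LinearMap.lsmul (ZMod (p ^ 2)) M) (p : ZMod (p ^ 2)))

/-- `Γ(M) = (Ann_M p) / pM`. -/
noncomputable abbrev GammaP (p : ℕ) (M : Type) [AddCommGroup M]
    [Module (ZMod (p ^ 2)) M] :=
  (annP p M) ⧸ ((pSM p M).comap (annP p M).subtype)

/-!
`Ann_M p` is killed by `p`, hence a semisimple module over the field `R ⧸ (p)`, so `pM ⊆ Ann_M p`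
has a complement `W` there, and `W ≅ Γ(M)`. Choose a basis `(b_i)` of `pM` over `R ⧸ (p)` and lifts
`e_i` with `p e_i = b_i`. Because `p² = 0`, reducing a relation `∑ g_i e_i = 0` twice modulo `p`
shows that the `e_i` are free; their span `F` satisfies `F + Ann_M p = M` and `F ∩ Ann_M p = pM`,
which makes `W` a complement of `F` in `M`. The argument works verbatim over any commutative ring
with an element `π` such that `π² = 0` and `(π)` is maximal.
-/

open Submodule

universe u

variable {R : Type*} [CommRing R] {M : Type u} [AddCommGroup M] [Module R M]

theorem Module.IsTorsionBySet.isSemisimpleModule {I : Ideal R} [I.IsMaximal]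
    (hM : Module.IsTorsionBySet R M I) : IsSemisimpleModule R M :=
  let _ := Ideal.Quotient.field I
  let _ := hM.module
  hM.isSemisimpleModule_iff.mp inferInstance

theorem Module.isTorsionBy_ker_lsmul (π : R) :
    Module.IsTorsionBy R (LinearMap.ker (LinearMap.lsmul R M π)) π :=
  fun x => Subtype.ext x.2

theorem Submodule.isCompl_map_subtype {A F : Submodule R M} {W : Submodule R A}
    (hW : IsCompl (F.comap A.subtype) W) (hAF : A ⊔ F = ⊤) : IsCompl (W.map A.subtype) F := by
  constructor
  · rw [disjoint_comm, Submodule.disjoint_def]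
    rintro _ hxF ⟨w, hw, rfl⟩
    simp [Submodule.disjoint_def.mp hW.disjoint w hxF hw]
  · rw [codisjoint_iff, eq_top_iff, ← hAF]
    refine sup_le ?_ le_sup_right
    calc A = (⊤ : Submodule R A).map A.subtype := A.map_subtype_top.symm
      _ = (F.comap A.subtype ⊔ W).map A.subtype := by rw [hW.sup_eq_top]
      _ ≤ W.map A.subtype ⊔ F := by
        rw [map_sup, sup_comm]
        exact sup_le_sup_left (map_comap_le _ _) _

/-- For a family killed by `I`, this is linear independence over `R ⧸ I`, stated without an
`R ⧸ I`-module structure on `M`. -/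
def LinearIndependentMod {ι : Type*} (I : Ideal R) (v : ι → M) : Prop :=
  ∀ (s : Finset ι) (g : ι → R), ∑ i ∈ s, g i • v i = 0 → ∀ i ∈ s, g i ∈ I

theorem LinearIndependent.linearIndependentMod {I : Ideal R} [Module (R ⧸ I) M]
    [IsScalarTower R (R ⧸ I) M] {ι : Type*} {v : ι → M} (hv : LinearIndependent (R ⧸ I) v) :
    LinearIndependentMod I v := by
  intro s g h i hi
  rw [← Ideal.Quotient.eq_zero_iff_mem]
  refine linearIndependent_iff'.mp hv s (fun i => Ideal.Quotient.mk I (g i)) ?_ i hi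
  simpa only [← Ideal.Quotient.algebraMap_eq, algebraMap_smul] using h

section SquareZero

variable {π : R} {ι : Type*} {e : ι → M}

theorem linearIndependent_of_linearIndependentMod_smul (hπ : π * π = 0)
    (he : LinearIndependentMod (Ideal.span {π}) fun i => π • e i) : LinearIndependent R e := by
  refine linearIndependent_iff'.mpr fun s g hg i hi => ?_
  have hdiv := he s g (by simp_rw [smul_comm _ π]; rw [← Finset.smul_sum, hg, smul_zero])
  choose! c hc using fun i hi => Ideal.mem_span_singleton'.mp (hdiv i hi)
  have hc' := he s c <| by
    rw [← hg]
    exact Finset.sum_congr rfl fun i hi => by rw [← hc i hi, mul_smul]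
  obtain ⟨d, hd⟩ := Ideal.mem_span_singleton'.mp (hc' i hi)
  rw [← hc i hi, ← hd, mul_assoc, hπ, mul_zero]

theorem span_range_inf_ker_lsmul_le_range
    (he : LinearIndependentMod (Ideal.span {π}) fun i => π • e i) :
    span R (Set.range e) ⊓ LinearMap.ker (LinearMap.lsmul R M π) ≤
      LinearMap.range (LinearMap.lsmul R M π) := by
  rintro x ⟨hxF, hxA⟩
  obtain ⟨l, rfl⟩ := Finsupp.mem_span_range_iff_exists_finsupp.mp hxF
  have hdiv := he l.support l <| by
    simpa [Finsupp.sum, Finset.smul_sum, smul_comm π] using hxA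
  refine Submodule.sum_mem _ fun i hi => ?_
  obtain ⟨c, hc⟩ := Ideal.mem_span_singleton'.mp (hdiv i hi)
  exact ⟨c • e i, by simp [← hc, mul_smul]⟩

theorem exists_linearIndependent_sup_ker_lsmul_eq_top [(Ideal.span {π}).IsMaximal]
    (hπ : π * π = 0) :
    ∃ (ι : Type u) (e : ι → M), LinearIndependent R e ∧
      LinearMap.ker (LinearMap.lsmul R M π) ⊔ span R (Set.range e) = ⊤ ∧
      span R (Set.range e) ⊓ LinearMap.ker (LinearMap.lsmul R M π) =
        LinearMap.range (LinearMap.lsmul R M π) := by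
  set A := LinearMap.ker (LinearMap.lsmul R M π)
  set P := LinearMap.range (LinearMap.lsmul R M π)
  have hPA : P ≤ A := by
    rintro _ ⟨y, rfl⟩
    show π • π • y = 0
    rw [smul_smul, hπ, zero_smul]
  let k := R ⧸ Ideal.span {π}
  let _ : Field k := Ideal.Quotient.field _
  let _ := (Module.isTorsionBy_ker_lsmul (M := M) π).module
  obtain ⟨b, hbP, hbspan, hbli⟩ := exists_linearIndependent k (P.comap A.subtype : Set A)
  choose e he using fun i : b => hbP i.2
  replace he : ∀ i, π • e i = ((i : A) : M) := he
  have hmod : LinearIndependentMod (Ideal.span {π}) fun i => π • e i := by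
    intro s g hg
    refine hbli.linearIndependentMod s g (Subtype.ext ?_)
    simpa [he] using hg
  have hP : P ≤ (span R (Set.range e)).map (LinearMap.lsmul R M π) := by
    intro x hx
    have hxb : (⟨x, hPA hx⟩ : A) ∈ span R b := by
      rw [← restrictScalars_span R k Ideal.Quotient.mk_surjective, hbspan]
      exact subset_span hx
    refine span_le.mpr ?_ (map_span A.subtype b ▸ mem_map_of_mem (f := A.subtype) hxb)
    rintro _ ⟨i, hi, rfl⟩
    exact ⟨e ⟨i, hi⟩, subset_span ⟨_, rfl⟩, he _⟩
  refine ⟨b, e, linearIndependent_of_linearIndependentMod_smul hπ hmod, ?_,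
    le_antisymm (span_range_inf_ker_lsmul_le_range hmod) (le_inf ?_ hPA)⟩
  · rw [sup_comm, ← codisjoint_iff]
    exact map_eq_range_iff.mp (le_antisymm LinearMap.map_le_range hP)
  · exact hP.trans (map_le_iff_le_comap.mpr fun x hx => smul_mem _ π hx)

theorem exists_linearEquiv_quotient_prod_finsupp [(Ideal.span {π}).IsMaximal]
    (hπ : π * π = 0) :
    ∃ ι : Type u, Nonempty (M ≃ₗ[R]
      (LinearMap.ker (LinearMap.lsmul R M π) ⧸ (LinearMap.range (LinearMap.lsmul R M π)).comap
        (LinearMap.ker (LinearMap.lsmul R M π)).subtype) × (ι →₀ R)) := by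
  obtain ⟨ι, e, hli, hsup, hinf⟩ := exists_linearIndependent_sup_ker_lsmul_eq_top (M := M) hπ
  set A := LinearMap.ker (LinearMap.lsmul R M π)
  have : IsSemisimpleModule R A := Module.IsTorsionBySet.isSemisimpleModule <|
    (Module.isTorsionBySet_span_singleton_iff π).mpr (Module.isTorsionBy_ker_lsmul π)
  obtain ⟨W, hW⟩ := exists_isCompl ((LinearMap.range (LinearMap.lsmul R M π)).comap A.subtype)
  have hWF : IsCompl ((span R (Set.range e)).comap A.subtype) W := by
    rwa [← hinf, comap_inf, comap_subtype_self, inf_top_eq] at hW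
  exact ⟨ι, ⟨(prodEquivOfIsCompl _ _ (isCompl_map_subtype hWF hsup)).symm ≪≫ₗ
    ((W.equivMapOfInjective _ A.injective_subtype).symm ≪≫ₗ
      (quotientEquivOfIsCompl _ _ hW).symm).prodCongr (Module.Basis.span hli).repr⟩⟩

end SquareZero

theorem ZMod.isMaximal_span_natCast_sq (p : ℕ) [Fact p.Prime] :
    (Ideal.span {(p : ZMod (p ^ 2))}).IsMaximal := by
  let f := ZMod.castHom (dvd_pow_self p two_ne_zero) (ZMod p)
  have hker : RingHom.ker f = Ideal.span {(p : ZMod (p ^ 2))} := by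
    apply le_antisymm
    · intro x hx
      obtain ⟨n, rfl⟩ := ZMod.natCast_zmod_surjective x
      obtain ⟨m, rfl⟩ := (ZMod.natCast_eq_zero_iff _ _).mp (by simpa [f] using hx)
      exact Ideal.mem_span_singleton.mpr ⟨m, by push_cast; ring⟩
    · rw [Ideal.span_le, Set.singleton_subset_iff]
      simp [f]
  exact hker ▸ RingHom.ker_isMaximal_of_surjective f (ZMod.ringHom_surjective f)

/-- Every module `M` over `Z/p²` is isomorphic to a direct sum of
`Γ(M) = (Ann_M p)/pM` and a free `Z/p²`-module. -/
theorem stmt0 (p : ℕ) [Fact p.Prime] (M : Type) [AddCommGroup M]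
    [Module (ZMod (p ^ 2)) M] :
    ∃ ι : Type, Nonempty (M ≃ₗ[ZMod (p ^ 2)] (GammaP p M × (ι →₀ ZMod (p ^ 2)))) := by
  have := ZMod.isMaximal_span_natCast_sq p
  exact exists_linearEquiv_quotient_prod_finsupp <| by
    rw [← Nat.cast_mul, ← sq, ZMod.natCast_self]
end

section
/- Let M be a module over a Frobenius ring T that is stably equivalent to a finitely generated module. Then M is compact in the stable module category: for any family (N_i) of T-modules, the natural map ⊕_i [M, N_i] → [M, ⊕_i N_i] of stable hom groups is an isomorphism. -/
open DirectSum

/-- A linear map factors through some projective module. -/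
def FactorsThroughProjective (T : Type) [Ring T] {M N : Type}
    [AddCommGroup M] [Module T M] [AddCommGroup N] [Module T N]
    (f : M →ₗ[T] N) : Prop :=
  ∃ P : ModuleCat.{0} T, Module.Projective T P ∧
    ∃ (α : M →ₗ[T] P) (β : P →ₗ[T] N), β ∘ₗ α = f

/-- `M` and `M'` are stably equivalent: isomorphic in the stable module category, i.e.
there are maps in both directions whose composites differ from the identities by maps
factoring through projectives. -/
def StablyEquivalent (T : Type) [Ring T] (M M' : Type)
    [AddCommGroup M] [Module T M] [AddCommGroup M'] [Module T M'] : Prop :=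
  ∃ (u : M →ₗ[T] M') (v : M' →ₗ[T] M),
    FactorsThroughProjective T (v ∘ₗ u - LinearMap.id) ∧
    FactorsThroughProjective T (u ∘ₗ v - LinearMap.id)

/-!
A map from a finitely generated module into `⨁ i, N i` lands in finitely many summands. If
`u : M → F` and `v : F → M` with `F` finitely generated and `v ∘ u ≡ id` modulo projectives, then
every `f : M → ⨁ i, N i` is stably equal to `f ∘ v ∘ u`, which factors through `F` and hence
through a finite subsum. Injectivity follows by projecting onto the summands.
-/

theorem FactorsThroughProjective.comp {T : Type} [Ring T] {M N K : Type}
    [AddCommGroup M] [Module T M] [AddCommGroup N] [Module T N] [AddCommGroup K] [Module T K]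
    {f : M →ₗ[T] N} (hf : FactorsThroughProjective T f) (g : N →ₗ[T] K) :
    FactorsThroughProjective T (g ∘ₗ f) := by
  obtain ⟨P, hP, α, β, rfl⟩ := hf
  exact ⟨P, hP, α, g ∘ₗ β, rfl⟩

namespace DirectSum

variable {R : Type*} [Semiring R] {ι : Type*} [DecidableEq ι] {M : ι → Type*}
  [∀ i, AddCommMonoid (M i)] [∀ i, Module R (M i)]

theorem sum_lof_component_of_forall_notMem {s : Finset ι} {x : ⨁ i, M i}
    (hx : ∀ i ∉ s, x i = 0) : ∑ i ∈ s, lof R ι M i (component R ι M i x) = x := by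
  classical
  have hsupp : x.support ⊆ s := fun i hi =>
    by_contra fun h => DFinsupp.mem_support_iff.1 hi (hx i h)
  conv_rhs => rw [← DFinsupp.sum_single (f := x)]
  rw [DFinsupp.sum_of_support_subset hsupp fun i _ => DFinsupp.single_zero i]
  rfl

theorem exists_finset_sum_lof_comp_component_comp_eq {F : Type*} [AddCommMonoid F] [Module R F]
    [Module.Finite R F] (φ : F →ₗ[R] ⨁ i, M i) :
    ∃ s : Finset ι, (∑ i ∈ s, lof R ι M i ∘ₗ component R ι M i) ∘ₗ φ = φ := by
  classical
  obtain ⟨S, hS⟩ := Module.finite_def.mp ‹Module.Finite R F›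
  refine ⟨S.biUnion fun x => (φ x).support, LinearMap.ext_on hS fun x hx => ?_⟩
  simp only [LinearMap.comp_apply, LinearMap.sum_apply]
  refine sum_lof_component_of_forall_notMem fun i hi => by_contra fun h => hi ?_
  exact Finset.mem_biUnion.2 ⟨x, hx, DFinsupp.mem_support_iff.2 h⟩

theorem component_comp_sum_lof_comp {F : Type*} [AddCommMonoid F] [Module R F] {s : Finset ι}
    {i : ι} (hi : i ∈ s) (g : ∀ j, F →ₗ[R] M j) :
    component R ι M i ∘ₗ ∑ j ∈ s, lof R ι M j ∘ₗ g j = g i := by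
  ext x
  simp only [LinearMap.comp_apply, LinearMap.sum_apply, map_sum]
  rw [Finset.sum_eq_single_of_mem i hi fun j _ hji => by rw [component.of, dif_neg hji]]
  exact component.lof_self R i (g i x)

end DirectSum

section StableHom

variable {T : Type} [Ring T] {ι : Type} [DecidableEq ι] {N : ι → Type}
  [∀ i, AddCommGroup (N i)] [∀ i, Module T (N i)]

theorem exists_factorsThroughProjective_sub_sum_lof_comp {M F : Type} [AddCommGroup M]
    [Module T M] [AddCommGroup F] [Module T F] [Module.Finite T F] (u : M →ₗ[T] F)
    (v : F →ₗ[T] M) (hvu : FactorsThroughProjective T (v ∘ₗ u - LinearMap.id))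
    (f : M →ₗ[T] ⨁ i, N i) :
    ∃ (s : Finset ι) (g : ∀ i, M →ₗ[T] N i),
      FactorsThroughProjective T (f - ∑ i ∈ s, lof T ι N i ∘ₗ g i) := by
  obtain ⟨s, hs⟩ := exists_finset_sum_lof_comp_component_comp_eq (f ∘ₗ v)
  refine ⟨s, fun i => component T ι N i ∘ₗ f ∘ₗ v ∘ₗ u, ?_⟩
  have hsum : ∑ i ∈ s, lof T ι N i ∘ₗ component T ι N i ∘ₗ f ∘ₗ v ∘ₗ u = f ∘ₗ v ∘ₗ u := by
    conv_rhs => rw [← LinearMap.comp_assoc, ← hs]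
    ext x
    simp only [LinearMap.comp_apply, LinearMap.sum_apply]
  convert hvu.comp (-f) using 1
  rw [hsum, LinearMap.comp_sub, LinearMap.comp_id, LinearMap.neg_comp, sub_neg_eq_add,
    neg_add_eq_sub]

theorem FactorsThroughProjective.of_sum_lof_comp {M : Type} [AddCommGroup M] [Module T M]
    {s : Finset ι} {g : ∀ i, M →ₗ[T] N i}
    (hg : FactorsThroughProjective T (∑ i ∈ s, lof T ι N i ∘ₗ g i)) {i : ι} (hi : i ∈ s) :
    FactorsThroughProjective T (g i) :=
  component_comp_sum_lof_comp hi g ▸ hg.comp (component T ι N i)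

end StableHom

theorem stmt6_general (T : Type) [Ring T]
    (M : Type) [AddCommGroup M] [Module T M]
    (hM : ∃ F : ModuleCat.{0} T, Module.Finite T F ∧ StablyEquivalent T M F)
    (ι : Type) [DecidableEq ι]
    (N : ι → Type) [∀ i, AddCommGroup (N i)] [∀ i, Module T (N i)] :
    -- surjectivity on stable hom classes
    (∀ f : M →ₗ[T] (⨁ i, N i),
      ∃ (s : Finset ι) (g : ∀ i, M →ₗ[T] N i),
        FactorsThroughProjective T
          (f - ∑ i ∈ s, (DirectSum.lof T ι N i) ∘ₗ g i)) ∧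
    -- injectivity on stable hom classes
    (∀ (s : Finset ι) (g : ∀ i, M →ₗ[T] N i),
      FactorsThroughProjective T (∑ i ∈ s, (DirectSum.lof T ι N i) ∘ₗ g i) →
      ∀ i ∈ s, FactorsThroughProjective T (g i)) := by
  obtain ⟨F, hF, u, v, hvu, -⟩ := hM
  exact ⟨exists_factorsThroughProjective_sub_sum_lof_comp u v hvu,
    fun s g hg i hi => hg.of_sum_lof_comp hi⟩

/-- Let `M` be a module over a Frobenius ring `T` (projectives and
injectives coincide) which is stably equivalent to a finitely generated module.  Then `M`
is compact in the stable module category: for any family `(N i)` of `T`-modules the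
natural map `⊕ᵢ [M, N i] → [M, ⊕ᵢ N i]` of stable hom groups is an isomorphism.
Surjectivity and injectivity of this map are expressed on representatives. -/
theorem stmt6 (T : Type) [Ring T]
    (hFrob : ∀ P : ModuleCat.{0} T, Module.Projective T P ↔ Module.Injective T P)
    (M : Type) [AddCommGroup M] [Module T M]
    (hM : ∃ F : ModuleCat.{0} T, Module.Finite T F ∧ StablyEquivalent T M F)
    (ι : Type) [DecidableEq ι]
    (N : ι → Type) [∀ i, AddCommGroup (N i)] [∀ i, Module T (N i)] :
    -- surjectivity on stable hom classes
    (∀ f : M →ₗ[T] (⨁ i, N i),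
      ∃ (s : Finset ι) (g : ∀ i, M →ₗ[T] N i),
        FactorsThroughProjective T
          (f - ∑ i ∈ s, (DirectSum.lof T ι N i) ∘ₗ g i)) ∧
    -- injectivity on stable hom classes
    (∀ (s : Finset ι) (g : ∀ i, M →ₗ[T] N i),
      FactorsThroughProjective T (∑ i ∈ s, (DirectSum.lof T ι N i) ∘ₗ g i) →
      ∀ i ∈ s, FactorsThroughProjective T (g i)) :=
  stmt6_general T M hM ι N
end

section
/- Let P be the Z-graded chain complex of Z/p²-modules with P_n = Z/p² for every n and differential multiplication by p, and let End(P) = Hom(P,P) be its endomorphism dga. Then H_n(End(P)) ≅ Z/p for every integer n. -/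
/-!
A cycle `f` of degree `n` satisfies `p (f_k + ε f_{k-1}) = 0` with `ε = ±1`, i.e. its reduction
`f̄` mod `p` satisfies `f̄_k = -ε f̄_{k-1}`. So `f̄` is determined by `f̄_0`, and every value of
`f̄_0` occurs (solve the recurrence in `Z/p²` in both directions). A cycle with `f̄ = 0` is `p h`
for some `h`, and it is a boundary because `g ↦ g - ε g(· - 1)` is onto `∏ Z/p²`, again by
solving a recurrence. Hence `f ↦ f̄_0` induces `H_n(End P) ≅ Z/p`.
-/

/-- The degree-`n` component of `End(P) = Hom(P,P)`, where `P` is the complete resolution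
of `Z/p` over `Z/p²` with `Z/p²` in every degree and differential multiplication by `p`:
it is identified with `∏_{i ∈ ℤ} Z/p²`. -/
abbrev EndPdeg (p : ℕ) (_ : ℤ) := ℤ → ZMod (p ^ 2)

/-- The differential of `End(P)` out of degree `n`:
`(df)_k = p (f_k + (−1)^{n+1} f_{k−1})`. -/
def endPd (p : ℕ) (n : ℤ) : EndPdeg p n →+ EndPdeg p (n - 1) :=
  AddMonoidHom.mk'
    (fun f k => (p : ZMod (p ^ 2)) *
      (f k + ((Int.negOnePow (n + 1) : ℤ) : ZMod (p ^ 2)) * f (k - 1)))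
    (by
      intro f g
      funext k
      simp only [Pi.add_apply]
      ring)

section ShiftRecurrence

variable {R : Type*} [Ring R] {u : R}

theorem exists_add_mul_sub_one_eq (hu : IsUnit u) (h : ℤ → R) (c : R) :
    ∃ g : ℤ → R, g 0 = c ∧ ∀ k, g k + u * g (k - 1) = h k := by
  obtain ⟨u, rfl⟩ := hu
  refine ⟨fun z => Int.inductionOn' (motive := fun _ => R) z 0 c
    (fun k _ x => h (k + 1) - u * x) (fun k _ x => ↑u⁻¹ * (h k - x)),
    Int.inductionOn'_self, fun k => ?_⟩
  dsimp only
  rcases le_or_gt k 0 with hk | hk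
  · rw [Int.inductionOn'_sub_one hk, Units.mul_inv_cancel_left, add_sub_cancel]
  · obtain ⟨j, hj, rfl⟩ : ∃ j, 0 ≤ j ∧ k = j + 1 := ⟨k - 1, by omega, by ring⟩
    rw [Int.inductionOn'_add_one hj, add_sub_cancel_right, sub_add_cancel]

theorem eq_zero_of_add_mul_sub_one_eq_zero (hu : IsUnit u) {x : ℤ → R}
    (hx : ∀ k, x k + u * x (k - 1) = 0) (h0 : x 0 = 0) : x = 0 := by
  funext k
  induction k using Int.induction_on with
  | zero => exact h0
  | succ k ih => simpa [ih] using hx (k + 1)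
  | pred k ih => simpa [ih, hu.mul_right_eq_zero] using hx (-k)

end ShiftRecurrence

namespace ZMod

variable {m k n : ℕ}

theorem castHom_eq_zero_iff_exists_eq_mul (h : m ∣ n) (x : ZMod n) :
    castHom h (ZMod m) x = 0 ↔ ∃ y, x = m * y := by
  refine ⟨fun hx => ?_, ?_⟩
  · obtain ⟨a, rfl⟩ := intCast_surjective x
    rw [map_intCast, intCast_zmod_eq_zero_iff_dvd] at hx
    obtain ⟨c, rfl⟩ := hx
    exact ⟨c, by push_cast; rfl⟩
  · rintro ⟨y, rfl⟩
    rw [map_mul, map_natCast, natCast_self, zero_mul]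

theorem natCast_mul_eq_zero_iff_castHom_eq_zero (hk : k ≠ 0) (hn : m * k = n) (x : ZMod n) :
    (k : ZMod n) * x = 0 ↔ castHom (Dvd.intro k hn) (ZMod m) x = 0 := by
  obtain ⟨a, rfl⟩ := intCast_surjective x
  rw [map_intCast, ← Int.cast_natCast, ← Int.cast_mul, intCast_zmod_eq_zero_iff_dvd,
    intCast_zmod_eq_zero_iff_dvd, ← hn, Nat.cast_mul, mul_comm _ a]
  exact mul_dvd_mul_iff_right (Int.natCast_ne_zero.mpr hk)

end ZMod

theorem Units.isUnit_intCast {R : Type*} [Ring R] (s : ℤˣ) : IsUnit ((s : ℤ) : R) :=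
  s.isUnit.map (Int.castRingHom R)

def modP (p : ℕ) : ZMod (p ^ 2) →+* ZMod p :=
  ZMod.castHom (Dvd.intro p (sq p).symm) (ZMod p)

section EndP

variable {p : ℕ} {n : ℤ}

theorem endPd_apply (f : EndPdeg p n) (k : ℤ) :
    endPd p n f k = (p : ZMod (p ^ 2)) *
      (f k + ((Int.negOnePow (n + 1) : ℤ) : ZMod (p ^ 2)) * f (k - 1)) := rfl

theorem mem_range_endPd_iff (f : ℤ → ZMod (p ^ 2)) :
    f ∈ (endPd p (n + 1)).range ↔ ∀ k, modP p (f k) = 0 := by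
  refine ⟨?_, fun hf => ?_⟩
  · rintro ⟨g, rfl⟩ k
    exact (ZMod.castHom_eq_zero_iff_exists_eq_mul _ _).mpr ⟨_, endPd_apply g k⟩
  · choose h hh using fun k => (ZMod.castHom_eq_zero_iff_exists_eq_mul _ _).mp (hf k)
    obtain ⟨g, -, hg⟩ := exists_add_mul_sub_one_eq ((n + 1 + 1).negOnePow.isUnit_intCast) h 0
    exact ⟨g, funext fun k => by rw [endPd_apply, hg, hh]⟩

variable [NeZero p]

theorem mem_ker_endPd_iff (f : EndPdeg p n) :
    f ∈ (endPd p n).ker ↔ ∀ k, modP p (f k) +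
      modP p ((Int.negOnePow (n + 1) : ℤ) : ZMod (p ^ 2)) * modP p (f (k - 1)) = 0 := by
  simp only [AddMonoidHom.mem_ker, funext_iff, endPd_apply, Pi.zero_apply, modP,
    ZMod.natCast_mul_eq_zero_iff_castHom_eq_zero (NeZero.ne p) (sq p).symm, map_add, map_mul]

variable (p n) in
def evalModP : (endPd p n).ker →+ ZMod p :=
  ((modP p).toAddMonoidHom.comp (Pi.evalAddMonoidHom _ 0)).comp (endPd p n).ker.subtype

theorem evalModP_surjective : Function.Surjective (evalModP p n) := by
  intro c
  obtain ⟨c', rfl⟩ := ZMod.castHom_surjective (Dvd.intro p (sq p).symm) c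
  obtain ⟨g, hg0, hg⟩ := exists_add_mul_sub_one_eq ((n + 1).negOnePow.isUnit_intCast) 0 c'
  refine ⟨⟨g, ?_⟩, congrArg (modP p) hg0⟩
  exact (mem_ker_endPd_iff g).mpr fun k => by
    rw [← map_mul, ← map_add, hg, Pi.zero_apply, map_zero]

theorem ker_evalModP :
    (evalModP p n).ker = (endPd p (n + 1)).range.addSubgroupOf (endPd p n).ker := by
  ext ⟨f, hf⟩
  have hrec := (mem_ker_endPd_iff f).mp hf
  have hunit := (n + 1).negOnePow.isUnit_intCast.map (modP p)
  rw [AddSubgroup.mem_addSubgroupOf, mem_range_endPd_iff, AddMonoidHom.mem_ker]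
  exact ⟨fun h0 => congrFun (eq_zero_of_add_mul_sub_one_eq_zero hunit hrec h0), fun hf0 => hf0 0⟩

end EndP

/-- For the complete resolution `P` of `Z/p` over `Z/p²` (with `Z/p²` in
every degree and differential multiplication by `p`), the homology of the endomorphism dga
`End(P) = Hom(P, P)` satisfies `H_n(End(P)) ≅ Z/p` for every integer `n`. -/
theorem stmt10 (p : ℕ) [Fact p.Prime] (n : ℤ) :
    Nonempty
      (((endPd p n).ker ⧸ ((endPd p (n + 1)).range.addSubgroupOf (endPd p n).ker))
        ≃+ ZMod p) := by
  have : NeZero p := ⟨(Fact.out : p.Prime).ne_zero⟩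
  exact ⟨(QuotientAddGroup.quotientAddEquivOfEq ker_evalModP.symm).trans
    (QuotientAddGroup.quotientKerEquivOfSurjective _ evalModP_surjective)⟩
end

section
/- In the graded ring B = Z/p⟨e, x⟩/(e² = 0, ex + xe = x², x³ = 0) with |e| = |x| = 1, there is no nonzero element of degree one that graded-commutes (anticommutes) with every element of degree one. -/
/-!
Write `b = α e + β x`. The relations `e² = 0` and `ex + xe = x²` give
`be + eb = β x²` and `bx + xb = (α + 2β) x²`. Moreover `γ x² = 0` forces `γ = 0`,
as one reads off the representation of `B` on `(Z/p)³`
sending `e ↦ E₀₁` and `x ↦ E₀₁ + E₁₂`, under which `x² ↦ E₀₂`. Hence `β = 0` and then `α = 0`.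
-/

/-- The relations defining `B = Z/p⟨e, x⟩/(e² = 0, ex + xe = x², x³ = 0)`,
where `e` is the generator `0` and `x` is the generator `1`. -/
inductive BRel (p : ℕ) : FreeAlgebra (ZMod p) (Fin 2) → FreeAlgebra (ZMod p) (Fin 2) → Prop
  | esq : BRel p (FreeAlgebra.ι (ZMod p) (0 : Fin 2) * FreeAlgebra.ι (ZMod p) 0) 0
  | comm : BRel p
      (FreeAlgebra.ι (ZMod p) (0 : Fin 2) * FreeAlgebra.ι (ZMod p) 1 +
        FreeAlgebra.ι (ZMod p) 1 * FreeAlgebra.ι (ZMod p) 0)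
      (FreeAlgebra.ι (ZMod p) (1 : Fin 2) * FreeAlgebra.ι (ZMod p) 1)
  | xcube : BRel p
      (FreeAlgebra.ι (ZMod p) (1 : Fin 2) * FreeAlgebra.ι (ZMod p) 1 *
        FreeAlgebra.ι (ZMod p) 1) 0

/-- The graded ring `B = Z/p⟨e, x⟩/(e² = 0, ex + xe = x², x³ = 0)`. -/
abbrev BRing (p : ℕ) := RingQuot (BRel p)

noncomputable def eB (p : ℕ) : BRing p :=
  RingQuot.mkAlgHom (ZMod p) (BRel p) (FreeAlgebra.ι (ZMod p) 0)

noncomputable def xB (p : ℕ) : BRing p :=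
  RingQuot.mkAlgHom (ZMod p) (BRel p) (FreeAlgebra.ι (ZMod p) 1)

section Anticommutator

variable {R A : Type*} [CommRing R] [Ring A] [Algebra R A] {e x : A}

theorem anticomm_left_of_mul_self_eq_zero (he : e * e = 0) (hex : e * x + x * e = x * x)
    (α β : R) : (α • e + β • x) * e + e * (α • e + β • x) = β • (x * x) := by
  rw [← hex]
  simp only [add_mul, mul_add, smul_mul_assoc, mul_smul_comm, he, smul_zero]
  module

theorem anticomm_right_of_anticomm_eq_sq (hex : e * x + x * e = x * x) (α β : R) :
    (α • e + β • x) * x + x * (α • e + β • x) = (α + 2 * β) • (x * x) := by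
  simp only [add_mul, mul_add, smul_mul_assoc, mul_smul_comm]
  rw [add_smul, ← hex]
  module

end Anticommutator

theorem eB_mul_eB (p : ℕ) : eB p * eB p = 0 := by
  simpa [eB] using RingQuot.mkAlgHom_rel (ZMod p) (BRel.esq (p := p))

theorem eB_mul_xB_add_xB_mul_eB (p : ℕ) : eB p * xB p + xB p * eB p = xB p * xB p := by
  simpa [eB, xB] using RingQuot.mkAlgHom_rel (ZMod p) (BRel.comm (p := p))

noncomputable def matrixRep (p : ℕ) : BRing p →ₐ[ZMod p] Matrix (Fin 3) (Fin 3) (ZMod p) :=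
  RingQuot.liftAlgHom (ZMod p)
    ⟨FreeAlgebra.lift (ZMod p) ![!![0, 1, 0; 0, 0, 0; 0, 0, 0], !![0, 1, 0; 0, 0, 1; 0, 0, 0]],
      by
        rintro _ _ (_ | _ | _) <;>
          simp [← Matrix.ext_iff, Fin.forall_fin_succ]⟩

theorem matrixRep_xB (p : ℕ) : matrixRep p (xB p) = !![0, 1, 0; 0, 0, 1; 0, 0, 0] := by
  simp [matrixRep, xB]

theorem smul_xB_mul_xB_eq_zero_iff (p : ℕ) (γ : ZMod p) :
    γ • (xB p * xB p) = 0 ↔ γ = 0 := by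
  refine ⟨fun h => ?_, fun h => by rw [h, zero_smul]⟩
  have h02 := congr_fun₂ (congrArg (matrixRep p) h) 0 2
  simpa [matrixRep_xB] using h02

theorem stmt16_general (p : ℕ)
    (b : BRing p) (hb : b ∈ Submodule.span (ZMod p) {eB p, xB p})
    (hcomm : ∀ c ∈ Submodule.span (ZMod p) {eB p, xB p}, b * c + c * b = 0) :
    b = 0 := by
  obtain ⟨α, β, rfl⟩ := Submodule.mem_span_pair.mp hb
  have hβ : β = 0 := by
    rw [← smul_xB_mul_xB_eq_zero_iff, ← anticomm_left_of_mul_self_eq_zero (eB_mul_eB p)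
      (eB_mul_xB_add_xB_mul_eB p) α β]
    exact hcomm _ (Submodule.subset_span (by simp))
  have hα : α = 0 := by
    have h := hcomm _ (Submodule.subset_span (Set.mem_insert_of_mem _ rfl))
    rwa [anticomm_right_of_anticomm_eq_sq (eB_mul_xB_add_xB_mul_eB p), hβ,
      smul_xB_mul_xB_eq_zero_iff, mul_zero, add_zero] at h
  simp [hα, hβ]

/-- In the graded ring `B = Z/p⟨e, x⟩/(e² = 0, ex + xe = x², x³ = 0)`
with `|e| = |x| = 1`, there is no nonzero element of degree one (i.e. in the span of `e`
and `x`) which graded-commutes (anticommutes) with every element of degree one. -/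
theorem stmt16 (p : ℕ) [Fact p.Prime]
    (b : BRing p) (hb : b ∈ Submodule.span (ZMod p) {eB p, xB p})
    (hcomm : ∀ c ∈ Submodule.span (ZMod p) {eB p, xB p}, b * c + c * b = 0) :
    b = 0 :=
  stmt16_general p b hb hcomm
end
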